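/- Let α, α̃ be minimizers of the Lasso objectives with dictionaries D and D̃ respectively on the same input x with ‖x‖₂ ≤ 1 + ν, and suppose ‖D − D̃‖₂ ≤ ε ≤ 2λ/(1+ν)². Then ‖Dα − Dα̃‖₂² ≤ (25ε/λ)(1+ν)². -/

import Mathlib

/-
Write `f_M(z) = ½‖x − Mz‖² + λ‖z‖₁`. Comparing a minimizer `α` of `f_D` with the midpoint
`(α + α̃)/2`, the parallelogram law turns minimality into the quadratic growth
`‖Dα − Dα̃‖² ≤ 4 (f_D(α̃) − f_D(α))`. Since `α̃` minimizes `f_D̃`, this gap is at most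
`(f_D − f_D̃)(α̃) + (f_D̃ − f_D)(α)`, and each term is controlled by `‖(D − D̃)z‖ ≤ ε‖z‖₁`,
together with the a priori bounds `‖x − Dα‖ ≤ ‖x‖` and `λ‖α‖₁ ≤ ‖x‖²/2` obtained by
comparing with `z = 0`.
-/

open scoped BigOperators
open Finset

noncomputable def l2 {n : ℕ} (x : Fin n → ℝ) : ℝ := Real.sqrt (∑ i, (x i) ^ 2)

noncomputable def l1 {n : ℕ} (x : Fin n → ℝ) : ℝ := ∑ i, |x i|

noncomputable def inp {n : ℕ} (x y : Fin n → ℝ) : ℝ := ∑ i, x i * y i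

/-- The Lasso objective `z ↦ (1/2)‖x − Dz‖₂² + λ‖z‖₁`. -/
noncomputable def lassoObj {d p : ℕ} (D : Matrix (Fin d) (Fin p) ℝ) (lam : ℝ)
    (x : Fin d → ℝ) (z : Fin p → ℝ) : ℝ :=
  (1 / 2) * (l2 (x - D.mulVec z)) ^ 2 + lam * l1 z

open Matrix

lemma l2_eq_norm {n : ℕ} (z : Fin n → ℝ) : l2 z = ‖WithLp.toLp 2 z‖ := by
  simp [l2, EuclideanSpace.norm_eq]

lemma l1_eq_norm {n : ℕ} (z : Fin n → ℝ) : l1 z = ‖WithLp.toLp 1 z‖ := by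
  simp [l1, PiLp.norm_eq_of_L1]

lemma l2_nonneg {n : ℕ} (z : Fin n → ℝ) : 0 ≤ l2 z := Real.sqrt_nonneg _

lemma l1_nonneg {n : ℕ} (z : Fin n → ℝ) : 0 ≤ l1 z := by
  rw [l1_eq_norm]; exact norm_nonneg _

lemma l2_sub_comm {n : ℕ} (y z : Fin n → ℝ) : l2 (y - z) = l2 (z - y) := by
  simp only [l2_eq_norm, WithLp.toLp_sub, norm_sub_rev]

lemma l2_add_le {n : ℕ} (y z : Fin n → ℝ) : l2 (y + z) ≤ l2 y + l2 z := by
  simp only [l2_eq_norm, WithLp.toLp_add]; exact norm_add_le _ _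

lemma l2_le_l1 {n : ℕ} (z : Fin n → ℝ) : l2 z ≤ l1 z := by
  have h := Finset.sum_sq_le_sq_sum_of_nonneg (s := Finset.univ) (f := fun i => |z i|)
    fun i _ => abs_nonneg _
  simp only [sq_abs] at h
  exact (Real.sqrt_le_sqrt h).trans_eq (Real.sqrt_sq (l1_nonneg z))

lemma l1_midpoint_le {n : ℕ} (y z : Fin n → ℝ) :
    l1 ((2⁻¹ : ℝ) • (y + z)) ≤ (l1 y + l1 z) / 2 := by
  simp only [l1_eq_norm, WithLp.toLp_smul, WithLp.toLp_add, norm_smul]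
  have := norm_add_le (WithLp.toLp 1 y) (WithLp.toLp 1 z)
  norm_num
  linarith

lemma sq_l2_midpoint {n : ℕ} (y z : Fin n → ℝ) :
    l2 ((2⁻¹ : ℝ) • (y + z)) ^ 2 = (l2 y ^ 2 + l2 z ^ 2) / 2 - l2 (y - z) ^ 2 / 4 := by
  have h := parallelogram_law_with_norm ℝ (WithLp.toLp 2 y) (WithLp.toLp 2 z)
  simp only [l2_eq_norm, WithLp.toLp_smul, WithLp.toLp_add, WithLp.toLp_sub, norm_smul]
  norm_num
  linarith

section Lasso

variable {d p : ℕ} (D : Matrix (Fin d) (Fin p) ℝ) {lam : ℝ} (x : Fin d → ℝ)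

lemma lassoObj_zero : lassoObj D lam x 0 = l2 x ^ 2 / 2 := by
  simp only [lassoObj, l1, mulVec_zero, sub_zero, Pi.zero_apply, abs_zero, sum_const_zero,
    mul_zero, add_zero]
  ring

lemma lassoObj_midpoint_le (hlam : 0 ≤ lam) (y z : Fin p → ℝ) :
    lassoObj D lam x ((2⁻¹ : ℝ) • (y + z)) ≤
      (lassoObj D lam x y + lassoObj D lam x z) / 2 - l2 (D *ᵥ y - D *ᵥ z) ^ 2 / 8 := by
  have hres : x - D *ᵥ ((2⁻¹ : ℝ) • (y + z)) = (2⁻¹ : ℝ) • ((x - D *ᵥ y) + (x - D *ᵥ z)) := by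
    rw [Matrix.mulVec_smul, Matrix.mulVec_add, smul_add, smul_add]
    module
  have hpar := sq_l2_midpoint (x - D *ᵥ y) (x - D *ᵥ z)
  rw [sub_sub_sub_cancel_left, l2_sub_comm (D *ᵥ z)] at hpar
  have hl1 := mul_le_mul_of_nonneg_left (l1_midpoint_le y z) hlam
  simp only [lassoObj, hres, hpar]
  linarith

variable {D x}

lemma l2_sub_mulVec_le_of_isMin (hlam : 0 ≤ lam) {α : Fin p → ℝ}
    (hmin : ∀ z, lassoObj D lam x α ≤ lassoObj D lam x z) : l2 (x - D *ᵥ α) ≤ l2 x := by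
  have h := hmin 0
  rw [lassoObj_zero, lassoObj] at h
  have := mul_nonneg hlam (l1_nonneg α)
  exact le_of_sq_le_sq (by linarith) (l2_nonneg x)

lemma mul_l1_le_of_isMin {α : Fin p → ℝ}
    (hmin : ∀ z, lassoObj D lam x α ≤ lassoObj D lam x z) : lam * l1 α ≤ l2 x ^ 2 / 2 := by
  have h := hmin 0
  rw [lassoObj_zero, lassoObj] at h
  nlinarith [sq_nonneg (l2 (x - D *ᵥ α))]

lemma sq_l2_mulVec_sub_le_of_isMin (hlam : 0 ≤ lam) {α : Fin p → ℝ}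
    (hmin : ∀ z, lassoObj D lam x α ≤ lassoObj D lam x z) (z : Fin p → ℝ) :
    l2 (D *ᵥ α - D *ᵥ z) ^ 2 ≤ 4 * (lassoObj D lam x z - lassoObj D lam x α) := by
  have := (hmin _).trans (lassoObj_midpoint_le D x hlam α z)
  linarith

lemma lassoObj_sub_lassoObj_le {D' : Matrix (Fin d) (Fin p) ℝ} {z : Fin p → ℝ} {t : ℝ}
    (ht : l2 (D *ᵥ z - D' *ᵥ z) ≤ t) :
    lassoObj D' lam x z - lassoObj D lam x z ≤ l2 (x - D *ᵥ z) * t + t ^ 2 / 2 := by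
  have htri : l2 (x - D' *ᵥ z) ≤ l2 (x - D *ᵥ z) + t := by
    have := l2_add_le (x - D *ᵥ z) (D *ᵥ z - D' *ᵥ z)
    rw [sub_add_sub_cancel] at this
    linarith
  have hsq := pow_le_pow_left₀ (l2_nonneg _) htri 2
  simp only [lassoObj]
  nlinarith

lemma mul_lassoObj_sub_lassoObj_le_of_isMin {D' : Matrix (Fin d) (Fin p) ℝ} {ε : ℝ}
    (hlam : 0 < lam) (hε0 : 0 ≤ ε) (hε : ε * l2 x ^ 2 ≤ 2 * lam) {α : Fin p → ℝ}
    (hmin : ∀ z, lassoObj D lam x α ≤ lassoObj D lam x z)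
    (hpert : l2 (D *ᵥ α - D' *ᵥ α) ≤ ε * l1 α) :
    lam * (lassoObj D' lam x α - lassoObj D lam x α) ≤ (l2 x + 1 / 2) * (ε * l2 x ^ 2 / 2) := by
  set u := ε * l1 α
  have hu0 : 0 ≤ u := mul_nonneg hε0 (l1_nonneg α)
  have hlu : lam * u ≤ ε * l2 x ^ 2 / 2 := by
    nlinarith [mul_le_mul_of_nonneg_left (mul_l1_le_of_isMin hmin) hε0]
  -- `λu ≤ ε‖x‖²/2 ≤ λ`, so `u ≤ 1` and the quadratic term `u²/2` is at most `u/2`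
  have hu1 : u ≤ 1 := le_of_mul_le_mul_left (by linarith) hlam
  have hres := mul_le_mul_of_nonneg_right (l2_sub_mulVec_le_of_isMin hlam.le hmin) hu0
  have hdiff := lassoObj_sub_lassoObj_le (lam := lam) (x := x) hpert
  calc lam * (lassoObj D' lam x α - lassoObj D lam x α) ≤ lam * (l2 x * u + u / 2) := by
        gcongr; nlinarith
    _ = (l2 x + 1 / 2) * (lam * u) := by ring
    _ ≤ (l2 x + 1 / 2) * (ε * l2 x ^ 2 / 2) := by gcongr; linarith [l2_nonneg x]

end Lasso

theorem stmt7_general {d p : ℕ} (D Dt : Matrix (Fin d) (Fin p) ℝ) (lam ν ε : ℝ)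
    (hlam : 0 < lam) (hν1 : ν ≤ 1) (hε0 : 0 ≤ ε)
    (hε : ε ≤ 2 * lam / (1 + ν) ^ 2)
    (x : Fin d → ℝ) (hx : l2 x ≤ 1 + ν)
    (hop : ∀ z : Fin p → ℝ, l2 ((D - Dt).mulVec z) ≤ ε * l2 z)
    (α : Fin p → ℝ) (hmin : ∀ z, lassoObj D lam x α ≤ lassoObj D lam x z)
    (αt : Fin p → ℝ) (hmint : ∀ z, lassoObj Dt lam x αt ≤ lassoObj Dt lam x z) :
    (l2 (D.mulVec α - D.mulVec αt)) ^ 2 ≤ (25 * ε / lam) * (1 + ν) ^ 2 := by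
  have hεx : ε * l2 x ^ 2 ≤ 2 * lam :=
    (mul_le_mul_of_nonneg_left (pow_le_pow_left₀ (l2_nonneg x) hx 2) hε0).trans
      (mul_le_of_le_div₀ (by positivity) (sq_nonneg _) hε)
  have hpert : ∀ z, l2 (D *ᵥ z - Dt *ᵥ z) ≤ ε * l1 z := fun z => by
    rw [← sub_mulVec]
    exact (hop z).trans (mul_le_mul_of_nonneg_left (l2_le_l1 z) hε0)
  have hα := mul_lassoObj_sub_lassoObj_le_of_isMin hlam hε0 hεx hmin (hpert α)
  have hαt := mul_lassoObj_sub_lassoObj_le_of_isMin hlam hε0 hεx hmint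
    ((l2_sub_comm _ _).trans_le (hpert αt))
  have hgrowth := sq_l2_mulVec_sub_le_of_isMin hlam.le hmin αt
  have hαt_min := mul_le_mul_of_nonneg_left (hmint α) hlam.le
  rw [div_mul_eq_mul_div, le_div_iff₀ hlam]
  calc l2 (D *ᵥ α - D *ᵥ αt) ^ 2 * lam
      ≤ 4 * (lam * (lassoObj D lam x αt - lassoObj Dt lam x αt)
          + lam * (lassoObj Dt lam x α - lassoObj D lam x α)) := by nlinarith
    _ ≤ 4 * (l2 x + 1 / 2) * (ε * l2 x ^ 2) := by linarith
    _ ≤ 4 * (5 / 2) * (ε * (1 + ν) ^ 2) := by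
        gcongr
        · linarith
        · exact l2_nonneg x
    _ ≤ 25 * ε * (1 + ν) ^ 2 := by nlinarith

/-- the reconstructions (with the same dictionary D) of the two Lasso
solutions obtained from nearby dictionaries are close. -/
theorem stmt7 {d p : ℕ} (D Dt : Matrix (Fin d) (Fin p) ℝ) (lam ν ε : ℝ)
    (hlam : 0 < lam) (hν : 0 ≤ ν) (hν1 : ν ≤ 1) (hε0 : 0 ≤ ε)
    (hε : ε ≤ 2 * lam / (1 + ν) ^ 2)
    (x : Fin d → ℝ) (hx : l2 x ≤ 1 + ν)
    (hop : ∀ z : Fin p → ℝ, l2 ((D - Dt).mulVec z) ≤ ε * l2 z)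
    (α : Fin p → ℝ) (hmin : ∀ z, lassoObj D lam x α ≤ lassoObj D lam x z)
    (αt : Fin p → ℝ) (hmint : ∀ z, lassoObj Dt lam x αt ≤ lassoObj Dt lam x z) :
    (l2 (D.mulVec α - D.mulVec αt)) ^ 2 ≤ (25 * ε / lam) * (1 + ν) ^ 2 :=
  stmt7_general D Dt lam ν ε hlam hν1 hε0 hε x hx hop α hmin αt hmint
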